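/- Let n ≥ 3 and let f : {0,1}^n → ℝ be strictly supermodular, i.e. A^{(ij)} f > 0 for all i ≠ j in [n]. Then the elementary submodular rank of f equals n: f cannot be written as f_0 + f_{i_1} + ⋯ + f_{i_r} with f_0 submodular and each f_{i_j} {i_j}-submodular whenever r + 1 < n. -/

import Mathlib

/-!
A tuple π of linear orders on {0,1} is encoded by its sign vector τ : Fin n → Bool, where `true`
means the standard order 0 < 1 (sign +1) and `false` the reversed order 1 < 0 (sign −1).
-/

/-- Componentwise meet of two subsets (as indicator vectors) w.r.t. the
product order with sign vector `τ`. -/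
def piMeet {n : ℕ} (τ : Fin n → Bool) (S T : Finset (Fin n)) : Finset (Fin n) :=
  Finset.univ.filter fun i => if τ i then i ∈ S ∧ i ∈ T else i ∈ S ∨ i ∈ T

/-- Componentwise join of two subsets (as indicator vectors) w.r.t. the
product order with sign vector `τ`. -/
def piJoin {n : ℕ} (τ : Fin n → Bool) (S T : Finset (Fin n)) : Finset (Fin n) :=
  Finset.univ.filter fun i => if τ i then i ∈ S ∨ i ∈ T else i ∈ S ∧ i ∈ T

def IsPiSupermodular {n : ℕ} (τ : Fin n → Bool) (f : Finset (Fin n) → ℝ) : Prop :=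
  ∀ S T : Finset (Fin n), f S + f T ≤ f (piMeet τ S T) + f (piJoin τ S T)

noncomputable def signR {n : ℕ} (τ : Fin n → Bool) (i : Fin n) : ℝ :=
  if τ i then 1 else -1

/-- The elementary imset expression: the row of `A^{(ij)} f` corresponding to
`z ⊆ [n] ∖ {i,j}`, namely `f(z) + f(z ∪ {i,j}) − f(z ∪ {i}) − f(z ∪ {j})`. -/
def imsetExpr {n : ℕ} (f : Finset (Fin n) → ℝ) (i j : Fin n) (z : Finset (Fin n)) : ℝ :=
  f z + f (insert i (insert j z)) - f (insert i z) - f (insert j z)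

def IsSubmodular {n : ℕ} (f : Finset (Fin n) → ℝ) : Prop :=
  ∀ S T : Finset (Fin n), f (S ∩ T) + f (S ∪ T) ≤ f S + f T

def elemSign {n : ℕ} (i : Fin n) : Fin n → Bool := fun j => decide (j ≠ i)

def IsElemSubmodular {n : ℕ} (i : Fin n) (f : Finset (Fin n) → ℝ) : Prop :=
  IsPiSupermodular (elemSign i) (fun S => -(f S))

/-!
A submodular function has `imsetExpr ≤ 0` at every pair `j ≠ k`, and an `{i}`-submodular one at
every pair avoiding `i`. So if `f = f₀ + ∑_{i ∈ B} f_i` and two indices `j ≠ k` lie outside `B`,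
then `imsetExpr f j k ∅ ≤ 0`, contradicting strict supermodularity; hence `|B| ≥ n - 1`.

Conversely, let `B` meet every pair. The gadget `g_i(S) = 0` for `i ∈ S`, `g_i(S) = -C |S|` for
`i ∉ S` is `{i}`-submodular, and `imsetExpr g_i j k z` is `C` if `i ∈ {j, k}` and `0` otherwise.
Taking `C ≥ imsetExpr f`, the function `f - ∑_{i ∈ B} g_i` has `imsetExpr ≤ 0` everywhere, and this
local condition already implies submodularity.
-/

open Finset

section

variable {n : ℕ}

lemma exists_ne_notMem_iff (B : Finset (Fin n)) :
    (∃ j k, j ≠ k ∧ j ∉ B ∧ k ∉ B) ↔ #B + 1 < n := by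
  have hcompl : #B + #Bᶜ = n := by rw [card_add_card_compl, Fintype.card_fin]
  have h := one_lt_card_iff (s := Bᶜ)
  simp only [mem_compl] at h
  constructor
  · rintro ⟨j, k, hjk, hj, hk⟩
    have := h.2 ⟨j, k, hj, hk, hjk⟩
    omega
  · intro hlt
    obtain ⟨j, k, hj, hk, hjk⟩ := h.1 (by omega)
    exact ⟨j, k, hjk, hj, hk⟩

lemma imsetExpr_comm (g : Finset (Fin n) → ℝ) (j k : Fin n) (z : Finset (Fin n)) :
    imsetExpr g j k z = imsetExpr g k j z := by
  unfold imsetExpr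
  rw [insert_comm]
  ring

lemma imsetExpr_add (g h : Finset (Fin n) → ℝ) (j k : Fin n) (z : Finset (Fin n)) :
    imsetExpr (g + h) j k z = imsetExpr g j k z + imsetExpr h j k z := by
  simp only [imsetExpr, Pi.add_apply]
  ring

lemma imsetExpr_sub (g h : Finset (Fin n) → ℝ) (j k : Fin n) (z : Finset (Fin n)) :
    imsetExpr (g - h) j k z = imsetExpr g j k z - imsetExpr h j k z := by
  simp only [imsetExpr, Pi.sub_apply]
  ring

lemma imsetExpr_sum {ι : Type*} (s : Finset ι) (F : ι → Finset (Fin n) → ℝ) (j k : Fin n)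
    (z : Finset (Fin n)) :
    imsetExpr (∑ i ∈ s, F i) j k z = ∑ i ∈ s, imsetExpr (F i) j k z := by
  simp only [imsetExpr, Finset.sum_apply, sum_add_distrib, sum_sub_distrib]

section LocalCriterion

variable {g : Finset (Fin n) → ℝ}

lemma insert_inter_insert_of_ne {j k : Fin n} {z : Finset (Fin n)} (hjk : j ≠ k) (hj : j ∉ z)
    (hk : k ∉ z) : insert j z ∩ insert k z = z := by
  rw [insert_inter_of_notMem (by simp [hjk, hj]), inter_insert_of_notMem hk, inter_self]

lemma insert_union_insert (j k : Fin n) (z : Finset (Fin n)) :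
    insert j z ∪ insert k z = insert j (insert k z) := by
  rw [insert_union, union_insert, union_self]

lemma IsSubmodular.imsetExpr_nonpos (hg : IsSubmodular g) {j k : Fin n} (hjk : j ≠ k)
    {z : Finset (Fin n)} (hj : j ∉ z) (hk : k ∉ z) : imsetExpr g j k z ≤ 0 := by
  have h := hg (insert j z) (insert k z)
  rw [insert_inter_insert_of_ne hjk hj hk, insert_union_insert] at h
  unfold imsetExpr
  linarith

lemma marginal_antitone_of_imsetExpr_nonpos
    (hg : ∀ j k : Fin n, j ≠ k → ∀ z, j ∉ z → k ∉ z → imsetExpr g j k z ≤ 0)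
    {i : Fin n} {S T : Finset (Fin n)} (hST : S ⊆ T) (hiT : i ∉ T) :
    g (insert i T) - g T ≤ g (insert i S) - g S := by
  rw [← union_eq_right.2 hST] at hiT ⊢
  clear hST
  induction T using Finset.induction_on with
  | empty => simp
  | insert a D _ ih =>
    rw [union_insert] at hiT ⊢
    have hia : i ≠ a := by rintro rfl; exact hiT (mem_insert_self _ _)
    have hiSD : i ∉ S ∪ D := fun h => hiT (mem_insert_of_mem h)
    by_cases haSD : a ∈ S ∪ D
    · rw [insert_eq_of_mem haSD]
      exact ih hiSD
    · have hloc := hg i a hia (S ∪ D) hiSD haSD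
      unfold imsetExpr at hloc
      linarith [ih hiSD]

lemma isSubmodular_of_imsetExpr_nonpos
    (hg : ∀ j k : Fin n, j ≠ k → ∀ z, j ∉ z → k ∉ z → imsetExpr g j k z ≤ 0) :
    IsSubmodular g := by
  intro S T
  have key : ∀ D : Finset (Fin n), Disjoint D T →
      g (S ∩ T) + g (T ∪ D) ≤ g ((S ∩ T) ∪ D) + g T := by
    intro D
    induction D using Finset.induction_on with
    | empty => simp
    | insert a D haD ih =>
      intro hdisj
      rw [disjoint_insert_left] at hdisj
      have hmarg := marginal_antitone_of_imsetExpr_nonpos hg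
        (union_subset_union_left (inter_subset_right (s₁ := S))) (i := a) (T := T ∪ D)
        (by simp [hdisj.1, haD])
      rw [union_insert, union_insert]
      linarith [ih hdisj.2]
  have hS : S ∩ T ∪ S \ T = S := by rw [union_comm, sdiff_union_inter]
  have := key (S \ T) sdiff_disjoint
  rwa [hS, union_sdiff_self_eq_union, union_comm T] at this

end LocalCriterion

section ElemSign

variable {i : Fin n} {S T : Finset (Fin n)}

lemma mem_piMeet_elemSign_self : i ∈ piMeet (elemSign i) S T ↔ i ∈ S ∨ i ∈ T := by
  simp [piMeet, elemSign]

lemma mem_piJoin_elemSign_self : i ∈ piJoin (elemSign i) S T ↔ i ∈ S ∧ i ∈ T := by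
  simp [piJoin, elemSign]

lemma erase_union_subset_piJoin_elemSign : (S ∪ T).erase i ⊆ piJoin (elemSign i) S T := by
  intro l hl
  rw [mem_erase, mem_union] at hl
  simp [piJoin, elemSign, hl.1, hl.2]

lemma piMeet_elemSign_of_iff (h : i ∈ S ↔ i ∈ T) : piMeet (elemSign i) S T = S ∩ T := by
  ext l
  by_cases hl : l = i
  · subst hl; simp [piMeet, elemSign]; tauto
  · simp [piMeet, elemSign, hl]

lemma piJoin_elemSign_of_iff (h : i ∈ S ↔ i ∈ T) : piJoin (elemSign i) S T = S ∪ T := by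
  ext l
  by_cases hl : l = i
  · subst hl; simp [piJoin, elemSign]; tauto
  · simp [piJoin, elemSign, hl]

lemma IsElemSubmodular.imsetExpr_nonpos {g : Finset (Fin n) → ℝ} (hg : IsElemSubmodular i g)
    {j k : Fin n} (hjk : j ≠ k) (hij : i ≠ j) (hik : i ≠ k) {z : Finset (Fin n)} (hj : j ∉ z)
    (hk : k ∉ z) : imsetExpr g j k z ≤ 0 := by
  have hiff : i ∈ insert j z ↔ i ∈ insert k z := by simp [hij, hik]
  have h := hg (insert j z) (insert k z)
  rw [piMeet_elemSign_of_iff hiff, piJoin_elemSign_of_iff hiff,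
    insert_inter_insert_of_ne hjk hj hk, insert_union_insert] at h
  unfold imsetExpr
  linarith

end ElemSign

section Gadget

noncomputable def elemGadget (C : ℝ) (i : Fin n) (S : Finset (Fin n)) : ℝ :=
  if i ∈ S then 0 else -C * #S

variable {C : ℝ} {i : Fin n}

lemma elemGadget_anti (hC : 0 ≤ C) {S T : Finset (Fin n)} (hST : S ⊆ T) (hiT : i ∉ T) :
    elemGadget C i T ≤ elemGadget C i S := by
  have hcard : (#S : ℝ) ≤ #T := by exact_mod_cast card_le_card hST
  have hiS : i ∉ S := fun h => hiT (hST h)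
  simp only [elemGadget, hiT, hiS, if_false]
  nlinarith

lemma isElemSubmodular_elemGadget (hC : 0 ≤ C) (i : Fin n) :
    IsElemSubmodular i (elemGadget C i) := by
  intro S T
  have hM := mem_piMeet_elemSign_self (i := i) (S := S) (T := T)
  have hJ := mem_piJoin_elemSign_self (i := i) (S := S) (T := T)
  have hsub := erase_union_subset_piJoin_elemSign (i := i) (S := S) (T := T)
  by_cases hS : i ∈ S <;> by_cases hT : i ∈ T
  · simp [elemGadget, hS, hT, hM, hJ]
  · have hTJ : T ⊆ piJoin (elemSign i) S T := (subset_erase.2 ⟨subset_union_right, hT⟩).trans hsub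
    have := elemGadget_anti hC hTJ (i := i) (by rw [hJ]; tauto)
    simp only [elemGadget, hS, hM, true_or, if_true] at this ⊢
    linarith
  · have hSJ : S ⊆ piJoin (elemSign i) S T := (subset_erase.2 ⟨subset_union_left, hS⟩).trans hsub
    have := elemGadget_anti hC hSJ (i := i) (by rw [hJ]; tauto)
    simp only [elemGadget, hT, hM, or_true, if_true] at this ⊢
    linarith
  · have hiff : i ∈ S ↔ i ∈ T := by tauto
    have hiSiT : i ∉ S ∩ T ∧ i ∉ S ∪ T := by simp [hS, hT]
    rw [piMeet_elemSign_of_iff hiff, piJoin_elemSign_of_iff hiff]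
    simp only [elemGadget, hS, hT, hiSiT, if_false]
    have hcard : (#(S ∩ T) : ℝ) + #(S ∪ T) = #S + #T := by
      exact_mod_cast card_inter_add_card_union S T
    linear_combination (-C) * hcard

lemma imsetExpr_elemGadget_self (C : ℝ) {j k : Fin n} (hjk : j ≠ k) {z : Finset (Fin n)}
    (hj : j ∉ z) (hk : k ∉ z) : imsetExpr (elemGadget C j) j k z = C := by
  have hjkz : j ∉ insert k z := by simp [hjk, hj]
  simp only [imsetExpr, elemGadget, hj, hjkz, mem_insert_self, if_true, if_false,
    card_insert_of_notMem hk]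
  push_cast
  ring

lemma imsetExpr_elemGadget (C : ℝ) {j k : Fin n} (hjk : j ≠ k) {z : Finset (Fin n)}
    (hj : j ∉ z) (hk : k ∉ z) :
    imsetExpr (elemGadget C i) j k z = if i = j ∨ i = k then C else 0 := by
  by_cases hij : i = j
  · subst hij; simp [imsetExpr_elemGadget_self C hjk hj hk]
  by_cases hik : i = k
  · subst hik; simp [imsetExpr_comm _ j, imsetExpr_elemGadget_self C hjk.symm hk hj]
  simp only [hij, hik, or_self, if_false]
  by_cases hiz : i ∈ z
  · simp [imsetExpr, elemGadget, hiz]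
  · have hjkz : j ∉ insert k z := by simp [hjk, hj]
    simp [imsetExpr, elemGadget, hiz, hij, hik, card_insert_of_notMem, hj, hk, hjkz]
    ring

end Gadget

lemma imsetExpr_nonpos_of_eq_add_sum {f f₀ : Finset (Fin n) → ℝ} {B : Finset (Fin n)}
    {F : Fin n → Finset (Fin n) → ℝ} (hf : f = f₀ + ∑ i ∈ B, F i) (h₀ : IsSubmodular f₀)
    (hF : ∀ i ∈ B, IsElemSubmodular i (F i)) {j k : Fin n} (hjk : j ≠ k) (hjB : j ∉ B)
    (hkB : k ∉ B) {z : Finset (Fin n)} (hj : j ∉ z) (hk : k ∉ z) : imsetExpr f j k z ≤ 0 := by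
  rw [hf, imsetExpr_add, imsetExpr_sum]
  have hsum : ∑ i ∈ B, imsetExpr (F i) j k z ≤ 0 := sum_nonpos fun i hi =>
    (hF i hi).imsetExpr_nonpos hjk (ne_of_mem_of_not_mem hi hjB) (ne_of_mem_of_not_mem hi hkB) hj hk
  linarith [h₀.imsetExpr_nonpos hjk hj hk]

lemma exists_eq_add_sum_of_forall_ne (f : Finset (Fin n) → ℝ) {B : Finset (Fin n)}
    (hB : ∀ j k : Fin n, j ≠ k → j ∈ B ∨ k ∈ B) :
    ∃ (f₀ : Finset (Fin n) → ℝ) (F : Fin n → Finset (Fin n) → ℝ),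
      IsSubmodular f₀ ∧ (∀ i ∈ B, IsElemSubmodular i (F i)) ∧ f = f₀ + ∑ i ∈ B, F i := by
  obtain ⟨C, hC⟩ := Finite.exists_le fun p : Fin n × Fin n × Finset (Fin n) =>
    imsetExpr f p.1 p.2.1 p.2.2
  have hC₀ : 0 ≤ max C 0 := le_max_right C 0
  refine ⟨f - ∑ i ∈ B, elemGadget (max C 0) i, elemGadget (max C 0),
    isSubmodular_of_imsetExpr_nonpos ?_, fun i _ => isElemSubmodular_elemGadget hC₀ i,
    (sub_add_cancel _ _).symm⟩
  intro j k hjk z hj hk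
  rw [imsetExpr_sub, imsetExpr_sum]
  simp_rw [imsetExpr_elemGadget _ hjk hj hk]
  obtain ⟨i, hiB, hi⟩ : ∃ i ∈ B, i = j ∨ i = k := by
    rcases hB j k hjk with h | h
    exacts [⟨j, h, .inl rfl⟩, ⟨k, h, .inr rfl⟩]
  have hsum : max C 0 ≤ ∑ l ∈ B, if l = j ∨ l = k then max C 0 else 0 := by
    refine le_trans ?_ (single_le_sum (fun l _ => ?_) hiB)
    · simp [hi]
    · split_ifs <;> simp [hC₀]
  linarith [hC (j, k, z), le_max_left C 0]

end

theorem statement6_general (n : ℕ) (f : Finset (Fin n) → ℝ)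
    (hstrict : ∀ i j : Fin n, i ≠ j → ∀ z : Finset (Fin n), i ∉ z → j ∉ z →
      0 < imsetExpr f i j z) :
    (∃ (B : Finset (Fin n)) (f₀ : Finset (Fin n) → ℝ)
        (F : Fin n → Finset (Fin n) → ℝ),
        B.card = n - 1 ∧ IsSubmodular f₀ ∧ (∀ i ∈ B, IsElemSubmodular i (F i)) ∧
        f = f₀ + ∑ i ∈ B, F i) ∧
    (∀ r : ℕ, r + 1 < n →
      ∀ (B : Finset (Fin n)) (f₀ : Finset (Fin n) → ℝ)
        (F : Fin n → Finset (Fin n) → ℝ),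
        B.card ≤ r → IsSubmodular f₀ → (∀ i ∈ B, IsElemSubmodular i (F i)) →
        f ≠ f₀ + ∑ i ∈ B, F i) := by
  constructor
  · obtain ⟨B, -, hB⟩ :=
      exists_subset_card_eq (s := (univ : Finset (Fin n))) (n := n - 1) (by simp)
    have hpair : ∀ j k : Fin n, j ≠ k → j ∈ B ∨ k ∈ B := by
      by_contra! h
      have := (exists_ne_notMem_iff B).1 h
      omega
    obtain ⟨f₀, F, h₀, hF, hf⟩ := exists_eq_add_sum_of_forall_ne f hpair
    exact ⟨B, f₀, F, hB, h₀, hF, hf⟩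
  · intro r hr B f₀ F hcard h₀ hF hf
    obtain ⟨j, k, hjk, hj, hk⟩ := (exists_ne_notMem_iff B).2 (by omega)
    exact (hstrict j k hjk ∅ (notMem_empty j) (notMem_empty k)).not_ge
      (imsetExpr_nonpos_of_eq_add_sum hf h₀ hF hjk hj hk (notMem_empty j) (notMem_empty k))

theorem statement6 (n : ℕ) (hn : 3 ≤ n) (f : Finset (Fin n) → ℝ)
    (hstrict : ∀ i j : Fin n, i ≠ j → ∀ z : Finset (Fin n), i ∉ z → j ∉ z →
      0 < imsetExpr f i j z) :
    (∃ (B : Finset (Fin n)) (f₀ : Finset (Fin n) → ℝ)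
        (F : Fin n → Finset (Fin n) → ℝ),
        B.card = n - 1 ∧ IsSubmodular f₀ ∧ (∀ i ∈ B, IsElemSubmodular i (F i)) ∧
        f = f₀ + ∑ i ∈ B, F i) ∧
    (∀ r : ℕ, r + 1 < n →
      ∀ (B : Finset (Fin n)) (f₀ : Finset (Fin n) → ℝ)
        (F : Fin n → Finset (Fin n) → ℝ),
        B.card ≤ r → IsSubmodular f₀ → (∀ i ∈ B, IsElemSubmodular i (F i)) →
        f ≠ f₀ + ∑ i ∈ B, F i) :=
  statement6_general n f hstrict
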